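/- Let k be a commutative ring and let Λ' be a set-partition of {1,...,r+1} with l = ℓ(Λ') parts, where 1 ≤ l ≤ n. Then V'(Λ') is isomorphic, as a k[W_{n-1}]-module, to H_{n-1}(l-1), the k[W_{n-1}]-submodule of U^{⊗(l-1)} generated by v_{n-l+1} ⊗ ... ⊗ v_{n-1}, where U is the k-span of v_1, ..., v_{n-1}. -/

import Mathlib

noncomputable section

open Equiv

/-- The linear action of a group `G` on the free `k`-module `X → k` of functions,
induced from a `G`-action on `X` by `(g • f) x = f (g⁻¹ • x)`. -/
def actEnd (k : Type) [CommRing k] (G : Type) [Group G] (X : Type) [MulAction G X] :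
    G →* Module.End k (X → k) where
  toFun g := LinearMap.funLeft k k fun x => g⁻¹ • x
  map_one' := by
    ext f x
    simp
  map_mul' g₁ g₂ := by
    ext f x
    simp [mul_smul]

/-- The diagonal (value-permutation) action of the symmetric group `W_n` on
`V^{⊗r}` (`V = k^n`), modelled as the free `k`-module on multi-indices `Fin r → Fin n`;
on basis vectors, `w ⬝ (v_{i_1} ⊗ ⋯ ⊗ v_{i_r}) = v_{w i_1} ⊗ ⋯ ⊗ v_{w i_r}`. -/
def permEnd (k : Type) [CommRing k] (n r : ℕ) :
    Equiv.Perm (Fin n) →* Module.End k ((Fin r → Fin n) → k) :=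
  actEnd k (Equiv.Perm (Fin n)) (Fin r → Fin n)

/-- `Φ_{n,r} : k[W_n] → End_k(V^{⊗r})`. -/
def PhiAlg (k : Type) [CommRing k] (n r : ℕ) :
    MonoidAlgebra k (Equiv.Perm (Fin n)) →ₐ[k] Module.End k ((Fin r → Fin n) → k) :=
  MonoidAlgebra.lift k (Module.End k ((Fin r → Fin n) → k)) (Equiv.Perm (Fin n)) (permEnd k n r)

/-- The restriction of `Φ_{n,r}` to the group algebra of a subgroup `G ≤ W_n`. -/
def PhiSub (k : Type) [CommRing k] (n r : ℕ) (G : Subgroup (Equiv.Perm (Fin n))) :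
    MonoidAlgebra k ↥G →ₐ[k] Module.End k ((Fin r → Fin n) → k) :=
  MonoidAlgebra.lift k (Module.End k ((Fin r → Fin n) → k)) ↥G ((permEnd k n r).comp G.subtype)

/-- `W_{n-1} = {w ∈ W_n : w(n) = n}`, the stabilizer of the last basis vector. -/
def stabLast (n : ℕ) (hn : 0 < n) : Subgroup (Equiv.Perm (Fin n)) :=
  MulAction.stabilizer (Equiv.Perm (Fin n)) (⟨n - 1, Nat.sub_lt hn Nat.one_pos⟩ : Fin n)

/-- `V(Λ)`: the span of the basis tensors whose multi-index has value-type `Λ`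
(the value-type of a multi-index `i` is the set-partition `Setoid.ker i` by fibers). -/
def Vpart (k : Type) [CommRing k] (n r : ℕ) (Λ : Setoid (Fin r)) :
    Submodule k ((Fin r → Fin n) → k) :=
  Submodule.span k {f | ∃ i : Fin r → Fin n, Setoid.ker i = Λ ∧ f = Pi.single i 1}

/-- `V'(Λ')`: the span of the basis tensors `v_{i_1} ⊗ ⋯ ⊗ v_{i_r} ⊗ v_n`
whose multi-index `(i_1, …, i_r, n)` has value-type `Λ'`. -/
def Vpart' (k : Type) [CommRing k] (n r : ℕ) (hn : 0 < n) (Λ' : Setoid (Fin (r + 1))) :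
    Submodule k ((Fin (r + 1) → Fin n) → k) :=
  Submodule.span k {f | ∃ i : Fin (r + 1) → Fin n, Setoid.ker i = Λ' ∧
    i (Fin.last r) = (⟨n - 1, Nat.sub_lt hn Nat.one_pos⟩ : Fin n) ∧ f = Pi.single i 1}

/-- The submodule `V^{⊗r} ⊗ v_n ⊆ V^{⊗(r+1)}`. -/
def lastSub (k : Type) [CommRing k] (n r : ℕ) (hn : 0 < n) :
    Submodule k ((Fin (r + 1) → Fin n) → k) :=
  Submodule.span k {f | ∃ i : Fin (r + 1) → Fin n,
    i (Fin.last r) = (⟨n - 1, Nat.sub_lt hn Nat.one_pos⟩ : Fin n) ∧ f = Pi.single i 1}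

/-- The multi-index of the tensor `v_{n-l+1} ⊗ ⋯ ⊗ v_n`. -/
def baseIdx (n l : ℕ) (h : l ≤ n) : Fin l → Fin n :=
  fun α => ⟨n - l + α.1, by have := α.isLt; omega⟩

/-- `H_n(l)`: the `k[W_n]`-submodule of `V^{⊗l}` generated by `v_{n-l+1} ⊗ ⋯ ⊗ v_n`. -/
def Hmod (k : Type) [CommRing k] (n l : ℕ) (h : l ≤ n) :
    Submodule k ((Fin l → Fin n) → k) :=
  Submodule.span k
    (Set.range fun w : Equiv.Perm (Fin n) => permEnd k n l w (Pi.single (baseIdx n l h) 1))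

/-- The multi-index of the tensor `v_{n-m} ⊗ ⋯ ⊗ v_{n-1}` (inside `U = ⟨v_1, …, v_{n-1}⟩`). -/
def baseIdx' (n m : ℕ) (h : m < n) : Fin m → Fin n :=
  fun α => ⟨n - 1 - m + α.1, by have := α.isLt; omega⟩

/-- `H_{n-1}(m)`: the `k[W_{n-1}]`-submodule of `U^{⊗m}` generated by
`v_{n-m} ⊗ ⋯ ⊗ v_{n-1}`, where `U = ⟨v_1, …, v_{n-1}⟩`. -/
def Hprime (k : Type) [CommRing k] (n m : ℕ) (h : m < n) :
    Submodule k ((Fin m → Fin n) → k) :=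
  Submodule.span k
    (Set.range fun w : ↥(stabLast n (by omega)) =>
      permEnd k n m ↑w (Pi.single (baseIdx' n m h) 1))

/-- The Young subgroup `W_{(n-l,1^l)}` of permutations fixing each of the last `l` points. -/
def fixTop (n l : ℕ) : Subgroup (Equiv.Perm (Fin n)) where
  carrier := {w | ∀ j : Fin n, n - l ≤ (j : ℕ) → w j = j}
  one_mem' := by intro j _; rfl
  mul_mem' := by
    intro a b ha hb j hj
    simp only [Set.mem_setOf_eq] at ha hb
    rw [Equiv.Perm.mul_apply, hb j hj, ha j hj]
  inv_mem' := by
    intro a ha j hj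
    simp only [Set.mem_setOf_eq] at ha
    conv_lhs => rw [← ha j hj]
    exact Equiv.symm_apply_apply a j

/-- The index of the consecutive block (with block sizes `lam`) containing position `x`. -/
def blockIdx (lam : List ℕ) (x : ℕ) : ℕ :=
  ((List.range lam.length).filter fun t => (lam.take (t + 1)).sum ≤ x).length

/-- The Young subgroup `W_λ ≤ W_d`: permutations preserving each consecutive block
of sizes `λ_1, λ_2, …`. -/
def youngSubgroup (d : ℕ) (lam : List ℕ) : Subgroup (Equiv.Perm (Fin d)) where
  carrier := {w | ∀ j : Fin d, blockIdx lam ((w j : Fin d) : ℕ) = blockIdx lam (j : ℕ)}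
  one_mem' := by intro j; rfl
  mul_mem' := by
    intro a b ha hb j
    simp only [Set.mem_setOf_eq] at ha hb
    rw [Equiv.Perm.mul_apply, ha (b j), hb j]
  inv_mem' := by
    intro a ha j
    simp only [Set.mem_setOf_eq] at ha
    conv_rhs => rw [← (by simp : a (a⁻¹ j) = j)]
    rw [ha (a⁻¹ j)]

/-- `x_λ = Σ_{w ∈ W_λ} w ∈ k[W_d]`. -/
def xElt (k : Type) [CommRing k] (d : ℕ) (lam : List ℕ) :
    MonoidAlgebra k (Equiv.Perm (Fin d)) :=
  letI := Classical.decPred (· ∈ youngSubgroup d lam)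
  ∑ w ∈ Finset.univ.filter (· ∈ youngSubgroup d lam), MonoidAlgebra.single w (1 : k)

/-- `y_λ = Σ_{w ∈ W_λ} sgn(w) w ∈ k[W_d]`. -/
def yElt (k : Type) [CommRing k] (d : ℕ) (lam : List ℕ) :
    MonoidAlgebra k (Equiv.Perm (Fin d)) :=
  letI := Classical.decPred (· ∈ youngSubgroup d lam)
  ∑ w ∈ Finset.univ.filter (· ∈ youngSubgroup d lam),
    MonoidAlgebra.single w ((Equiv.Perm.sign w : ℤ) : k)

/-- `y_λ = Σ_{w ∈ W_λ ∩ G} sgn(w) w`, as an element of the group algebra of a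
subgroup `G ≤ W_d` (for `G = W_{n-1}` and `λ ⊢ n-1` this is the usual `y_λ ∈ k[W_{n-1}]`). -/
def yEltSub (k : Type) [CommRing k] {d : ℕ} (G : Subgroup (Equiv.Perm (Fin d)))
    (lam : List ℕ) : MonoidAlgebra k ↥G :=
  letI : Fintype ↥G := Fintype.ofFinite ↥G
  letI := Classical.decPred fun w : ↥G => (w : Equiv.Perm (Fin d)) ∈ youngSubgroup d lam
  ∑ w ∈ Finset.univ.filter (fun w : ↥G => (w : Equiv.Perm (Fin d)) ∈ youngSubgroup d lam),
    MonoidAlgebra.single w ((Equiv.Perm.sign (w : Equiv.Perm (Fin d)) : ℤ) : k)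

/-- The dominance order on partitions (as lists of parts): `lam ⊵ mu`. -/
def Dominates (lam mu : List ℕ) : Prop :=
  ∀ t : ℕ, (mu.take t).sum ≤ (lam.take t).sum

/-- The conjugate (transpose) partition: `μᵀ_i = #{j : μ_j ≥ i}`. -/
def conjList (mu : List ℕ) : List ℕ :=
  (List.range mu.headI).map fun i => (mu.filter fun p => i < p).length

/-- `lam` is a partition of `d`: positive parts, in weakly decreasing order, summing to `d`. -/
def IsPartitionList (d : ℕ) (lam : List ℕ) : Prop :=
  (∀ p ∈ lam, 0 < p) ∧ lam.sum = d ∧ lam.Pairwise (· ≥ ·)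

/-- The hook partition `α(d,r) = (d-r, 1^r)`. -/
def hookPartition (d r : ℕ) : List ℕ := (d - r) :: List.replicate r 1

/-- The representation of `k[W_d]` on the permutation module `M^λ`, the free `k`-module
on the left cosets `W_d / W_λ` with `W_d` acting by left translation. -/
def PhiQuot (k : Type) [CommRing k] (d : ℕ) (lam : List ℕ) :
    MonoidAlgebra k (Equiv.Perm (Fin d)) →ₐ[k]
      Module.End k ((Equiv.Perm (Fin d) ⧸ youngSubgroup d lam) → k) :=
  MonoidAlgebra.lift k _ _
    (actEnd k (Equiv.Perm (Fin d)) (Equiv.Perm (Fin d) ⧸ youngSubgroup d lam))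

/-- The representation of `k[G]` (for `G ≤ W_d`) on the permutation module on the
left cosets `G / (G ∩ W_λ)`. -/
def PhiQuotSub (k : Type) [CommRing k] {d : ℕ} (G : Subgroup (Equiv.Perm (Fin d)))
    (lam : List ℕ) :
    MonoidAlgebra k ↥G →ₐ[k]
      Module.End k ((↥G ⧸ Subgroup.comap G.subtype (youngSubgroup d lam)) → k) :=
  MonoidAlgebra.lift k _ _
    (actEnd k ↥G (↥G ⧸ Subgroup.comap G.subtype (youngSubgroup d lam)))

/-- The Stirling number of the second kind `S(r,l)`: the number of set-partitions
of an `r`-element set into exactly `l` nonempty blocks. -/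
def stirling (r l : ℕ) : ℕ :=
  Nat.card {Λ : Setoid (Fin r) // Nat.card (Quotient Λ) = l}

/-! A basis tensor of `V'(Λ')` is `v_{i_1} ⊗ ⋯ ⊗ v_{i_r} ⊗ v_n` with `i` constant exactly on
the blocks of `Λ'`, so it amounts to an injective labelling of the `l` blocks by `{1, …, n}`
that gives the block of `r + 1` the label `n`. Listing the other `l - 1` labels in a fixed
order of the blocks is a `W_{n-1}`-equivariant bijection onto the injective `(l-1)`-tuples
avoiding `n`, and these tuples form the `W_{n-1}`-orbit of `(n-l+1, …, n-1)`, i.e. they index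
the basis tensors spanning `H_{n-1}(l-1)`. Extending by zero along this bijection of basis
tensors gives the isomorphism. -/

open Function

def spanSingle (k : Type) [Semiring k] {X : Type} [DecidableEq X] (S : Set X) :
    Submodule k (X → k) :=
  Submodule.span k ((fun x => Pi.single x (1 : k)) '' S)

section ActEnd

variable (k : Type) [CommRing k] {G : Type} [Group G] {X Y : Type} [MulAction G X]
  [MulAction G Y]

lemma actEnd_single [DecidableEq X] (g : G) (x : X) (c : k) :
    actEnd k G X g (Pi.single x c) = Pi.single (g • x) c := by
  funext y
  simp [actEnd, Pi.single_apply, inv_smul_eq_iff]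

lemma actEnd_mem_spanSingle [DecidableEq X] {S : Set X} {g : G} (hS : ∀ x ∈ S, g • x ∈ S)
    {v : X → k} (hv : v ∈ spanSingle k S) : actEnd k G X g v ∈ spanSingle k S := by
  have hle : (spanSingle k S).map (actEnd k G X g) ≤ spanSingle k S := by
    rw [spanSingle, Submodule.map_span, Submodule.span_le, Set.image_image]
    rintro _ ⟨x, hx, rfl⟩
    simp only [actEnd_single]
    exact Submodule.subset_span ⟨g • x, hS x hx, rfl⟩
  exact hle (Submodule.mem_map_of_mem hv)

lemma extendByZero_single [DecidableEq X] [DecidableEq Y] {φ : X → Y} (hφ : Injective φ)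
    (x : X) (c : k) :
    ExtendByZero.linearMap k φ (Pi.single x c) = Pi.single (φ x) c := by
  funext y
  by_cases hy : ∃ x', φ x' = y
  · obtain ⟨x', rfl⟩ := hy
    simp [hφ.extend_apply, Pi.single_apply, hφ.eq_iff]
  · simp only [ExtendByZero.linearMap_apply, extend_apply' _ _ _ hy]
    rw [Pi.single_eq_of_ne]
    · rfl
    · rintro rfl
      exact hy ⟨x, rfl⟩

lemma actEnd_comp_extendByZero [Finite X] {φ : X → Y} (hφ : Injective φ) {g : G}
    (hg : ∀ x, φ (g • x) = g • φ x) :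
    actEnd k G Y g ∘ₗ ExtendByZero.linearMap k φ =
      ExtendByZero.linearMap k φ ∘ₗ actEnd k G X g := by
  classical
  refine LinearMap.pi_ext fun x c => ?_
  simp [actEnd_single, extendByZero_single k hφ, hg]

lemma map_extendByZero_spanSingle [DecidableEq X] [DecidableEq Y] {φ : X → Y}
    (hφ : Injective φ) (S : Set X) :
    (spanSingle k S).map (ExtendByZero.linearMap k φ) = spanSingle k (φ '' S) := by
  rw [spanSingle, spanSingle, Submodule.map_span, Set.image_image, Set.image_image]
  simp only [extendByZero_single k hφ]

end ActEnd

lemma exists_linearEquiv_of_injective_intertwining {R ι M N : Type*} [Semiring R]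
    [AddCommMonoid M] [Module R M] [AddCommMonoid N] [Module R N]
    (f : M →ₗ[R] N) (hf : Injective f) {P : Submodule R M} {Q : Submodule R N}
    (hPQ : P.map f = Q) (A : ι → Module.End R M) (B : ι → Module.End R N)
    (hA : ∀ i v, v ∈ P → A i v ∈ P) (hAB : ∀ i, B i ∘ₗ f = f ∘ₗ A i) :
    ∃ (hB : ∀ i v, v ∈ Q → B i v ∈ Q) (e : P ≃ₗ[R] Q),
      ∀ i (x : P), e ⟨A i x, hA i x x.2⟩ = ⟨B i (e x), hB i (e x) (e x).2⟩ := by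
  have hB : ∀ i v, v ∈ Q → B i v ∈ Q := by
    rintro i _ hv
    rw [← hPQ] at hv ⊢
    obtain ⟨u, hu, rfl⟩ := hv
    exact ⟨A i u, hA i u hu, (LinearMap.congr_fun (hAB i) u).symm⟩
  refine ⟨hB, (Submodule.equivMapOfInjective f hf P).trans (LinearEquiv.ofEq _ _ hPQ),
    fun i x => Subtype.ext ?_⟩
  exact (LinearMap.congr_fun (hAB i) x).symm

theorem Setoid.ker_comp_mk_eq_iff {α β : Type*} {Λ : Setoid α} {g : Quotient Λ → β} :
    Setoid.ker (g ∘ Quotient.mk Λ) = Λ ↔ Injective g := by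
  constructor
  · intro hker x y
    induction x, y using Quotient.ind₂ with
    | _ x y =>
      intro h
      have hxy : Setoid.ker (g ∘ Quotient.mk Λ) x y := h
      rw [hker] at hxy
      exact Quotient.sound hxy
  · intro hg
    ext x y
    simp [Setoid.ker_def, hg.eq_iff, Quotient.eq]

theorem Finite.exists_equiv_fin_last {X : Type*} {m : ℕ} (hX : Nat.card X = m + 1) (x : X) :
    ∃ c : X ≃ Fin (m + 1), c x = Fin.last m := by
  have : Finite X := Nat.finite_of_card_ne_zero (by omega)
  let c₀ := Finite.equivFinOfCardEq hX
  exact ⟨c₀.trans (Equiv.swap (c₀ x) (Fin.last m)), by simp⟩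

def injectionsAvoiding {β : Type*} (m : ℕ) (p : β) : Set (Fin m → β) :=
  {j | Injective j ∧ p ∉ Set.range j}

section LabelBlocks

variable {α β : Type*} {Λ : Setoid α} {m : ℕ} (c : Quotient Λ ≃ Fin (m + 1)) (p : β)

def labelBlocks (j : Fin m → β) : α → β :=
  (Fin.snoc j p : Fin (m + 1) → β) ∘ c ∘ Quotient.mk Λ

lemma labelBlocks_injective : Injective (labelBlocks c p) := by
  intro j j' h
  have hsnoc : (Fin.snoc j p : Fin (m + 1) → β) = Fin.snoc j' p :=
    c.surjective.injective_comp_right (Quotient.mk_surjective.injective_comp_right h)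
  exact (Fin.snoc_inj.mp hsnoc).1

lemma labelBlocks_smul {G : Type*} [SMul G β] {g : G} (hg : g • p = p) (j : Fin m → β) :
    labelBlocks c p (g • j) = g • labelBlocks c p j := by
  funext t
  have := congrFun (Fin.comp_snoc (g • ·) j p) (c ⟦t⟧)
  simp only [comp_apply, hg] at this
  exact this.symm

lemma image_labelBlocks {a : α} (ha : c ⟦a⟧ = Fin.last m) :
    labelBlocks c p '' injectionsAvoiding m p = {i | Setoid.ker i = Λ ∧ i a = p} := by
  ext i
  constructor
  · rintro ⟨j, hj, rfl⟩
    refine ⟨Setoid.ker_comp_mk_eq_iff (g := (Fin.snoc j p : Fin (m + 1) → β) ∘ c) |>.mpr ?_,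
      by simp [labelBlocks, ha]⟩
    exact c.injective_comp _ |>.mpr (Fin.snoc_injective_iff.mpr hj)
  · rintro ⟨hker, hia⟩
    let g : Quotient Λ → β := Quotient.lift i hker.ge
    have hg : Injective g := (Setoid.ker_comp_mk_eq_iff (g := g)).mp hker
    have hlast : (g ∘ c.symm) (Fin.last m) = p := by simp [g, ← ha, hia]
    have hsnoc : (Fin.snoc (Fin.init (g ∘ c.symm)) p : Fin (m + 1) → β) = g ∘ c.symm := by
      rw [← hlast, Fin.snoc_init_self]
    refine ⟨Fin.init (g ∘ c.symm), Fin.snoc_injective_iff.mp ?_, ?_⟩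
    · rw [hsnoc]
      exact hg.comp c.symm.injective
    · rw [labelBlocks, hsnoc]
      funext t
      simp [g]

end LabelBlocks

lemma smul_mem_injectionsAvoiding {G β : Type*} [Group G] [MulAction G β] {m : ℕ} {p : β}
    {g : G} (hg : g • p = p) {j : Fin m → β} (hj : j ∈ injectionsAvoiding m p) :
    g • j ∈ injectionsAvoiding m p := by
  refine ⟨(MulAction.injective g).comp hj.1, ?_⟩
  rintro ⟨a, ha⟩
  exact hj.2 ⟨a, smul_left_cancel g (ha.trans hg.symm)⟩

section StabLast

variable {n : ℕ} (hn : 0 < n)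

/-- Basis vectors are indexed by `Fin n`, so `v_n` is indexed by `n - 1`. -/
def lastPt : Fin n := ⟨n - 1, Nat.sub_lt hn Nat.one_pos⟩

lemma smul_lastPt (w : stabLast n hn) : (w : Perm (Fin n)) • lastPt hn = lastPt hn := w.2

lemma baseIdx'_mem_injectionsAvoiding {m : ℕ} (h : m < n) :
    baseIdx' n m h ∈ injectionsAvoiding m (lastPt hn) := by
  refine ⟨fun a b hab => Fin.ext ?_, ?_⟩
  · have := congrArg Fin.val hab
    simp only [baseIdx'] at this
    omega
  · rintro ⟨a, ha⟩
    have := congrArg Fin.val ha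
    simp only [baseIdx', lastPt] at this
    omega

lemma range_smul_baseIdx' {m : ℕ} (h : m < n) :
    Set.range (fun w : stabLast n hn => (w : Perm (Fin n)) • baseIdx' n m h) =
      injectionsAvoiding m (lastPt hn) := by
  ext j
  constructor
  · rintro ⟨w, rfl⟩
    exact smul_mem_injectionsAvoiding (smul_lastPt hn w) (baseIdx'_mem_injectionsAvoiding hn h)
  · intro hj
    obtain ⟨σ, hσ⟩ := Perm.exists_extending_pair _ _
      (Fin.snoc_injective_iff.mpr (baseIdx'_mem_injectionsAvoiding hn h))
      (Fin.snoc_injective_iff.mpr hj)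
    have hσlast : σ • lastPt hn = lastPt hn := by simpa using hσ (Fin.last m)
    exact ⟨⟨σ, hσlast⟩, funext fun a => by simpa using hσ a.castSucc⟩

lemma Hprime_eq_spanSingle (k : Type) [CommRing k] {m : ℕ} (h : m < n) :
    Hprime k n m h = spanSingle k (injectionsAvoiding m (lastPt hn)) := by
  rw [Hprime, spanSingle, ← range_smul_baseIdx' hn h, ← Set.range_comp]
  simp only [comp_def, permEnd, actEnd_single]

lemma Vpart'_eq_spanSingle (k : Type) [CommRing k] (r : ℕ) (Λ' : Setoid (Fin (r + 1))) :
    Vpart' k n r hn Λ' =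
      spanSingle k {i | Setoid.ker i = Λ' ∧ i (Fin.last r) = lastPt hn} := by
  rw [Vpart', spanSingle]
  congr 1
  ext f
  simp [lastPt, eq_comm, and_assoc]

lemma permEnd_mem_Hprime (k : Type) [CommRing k] {m : ℕ} (h : m < n) (w : stabLast n hn)
    {v : (Fin m → Fin n) → k} (hv : v ∈ Hprime k n m h) :
    permEnd k n m w v ∈ Hprime k n m h := by
  rw [Hprime_eq_spanSingle hn] at hv ⊢
  exact actEnd_mem_spanSingle k (fun _ => smul_mem_injectionsAvoiding (smul_lastPt hn w)) hv

end StabLast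

/-- For a set-partition `Λ'` of `{1, …, r+1}` with `l = ℓ(Λ')` parts (`1 ≤ l ≤ n`),
`V'(Λ') ≅ H_{n-1}(l-1)` as `k[W_{n-1}]`-modules. -/
theorem stmt_8 (k : Type) [CommRing k] (n r l : ℕ) (hn : 0 < n) (hl : 1 ≤ l)
    (hln : l ≤ n) (Λ' : Setoid (Fin (r + 1))) (hcard : Nat.card (Quotient Λ') = l) :
    ∃ (h1 : ∀ (w : ↥(stabLast n hn)) (v : (Fin (l - 1) → Fin n) → k),
        v ∈ Hprime k n (l - 1) (by omega) →
          permEnd k n (l - 1) ↑w v ∈ Hprime k n (l - 1) (by omega))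
      (h2 : ∀ (w : ↥(stabLast n hn)) (v : (Fin (r + 1) → Fin n) → k),
        v ∈ Vpart' k n r hn Λ' → permEnd k n (r + 1) ↑w v ∈ Vpart' k n r hn Λ')
      (e : ↥(Hprime k n (l - 1) (by omega)) ≃ₗ[k] ↥(Vpart' k n r hn Λ')),
      ∀ (w : ↥(stabLast n hn)) (x : ↥(Hprime k n (l - 1) (by omega))),
        e ⟨permEnd k n (l - 1) ↑w ↑x, h1 w ↑x x.2⟩ =
          ⟨permEnd k n (r + 1) ↑w ↑(e x), h2 w ↑(e x) (e x).2⟩ := by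
  obtain ⟨m, rfl⟩ : ∃ m, l = m + 1 := ⟨l - 1, by omega⟩
  have hm : m < n := by omega
  obtain ⟨c, hc⟩ := Finite.exists_equiv_fin_last hcard ⟦Fin.last r⟧
  let φ := labelBlocks c (lastPt hn)
  have hφ : Injective φ := labelBlocks_injective c (lastPt hn)
  have hmap : (Hprime k n m hm).map (ExtendByZero.linearMap k φ) = Vpart' k n r hn Λ' := by
    rw [Hprime_eq_spanSingle hn, Vpart'_eq_spanSingle hn, map_extendByZero_spanSingle k hφ,
      image_labelBlocks c _ hc]
  have hstable : ∀ (w : stabLast n hn) v, v ∈ Hprime k n m hm →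
      permEnd k n m w v ∈ Hprime k n m hm := fun w _ => permEnd_mem_Hprime hn k hm w
  exact ⟨hstable, exists_linearEquiv_of_injective_intertwining _ (extend_injective hφ 0) hmap
    _ _ hstable fun w => actEnd_comp_extendByZero k hφ (labelBlocks_smul c _ (smul_lastPt hn w))⟩
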